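/- arXiv:1904.12398 — 3 statements merged into one kernel-verified Lean document; each statement's English description precedes it below -/
import Mathlib

section
/- Let Θ ⊆ ℝ^p be open and convex, let I be a p×p real symmetric positive definite matrix with smallest eigenvalue λ > 0, and let M > 0, η ≥ 0, δ > 0 satisfy η/2 + Mδ/6 ≤ λ/4. Let n ≥ 1, let G_n : Θ → ℝ be three times continuously differentiable with sup_{γ∈Θ} ‖∂³G_n(γ)‖ ≤ M·n, and let γ̂_n ∈ Θ satisfy ∂G_n(γ̂_n) = 0 and ‖(1/n)·∂²G_n(γ̂_n) + I‖ ≤ η (operator norm). Then for every t ∈ ℝ^p with |t| ≤ δ√n and γ̂_n + t/√n ∈ Θ, one has G_n(γ̂_n + t/√n) − G_n(γ̂_n) ≤ −(1/4)·tᵀ I t. -/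
open MeasureTheory Filter Topology

/-- The quadratic form `s ↦ sᵀ I t` associated with a matrix `I`. -/
noncomputable def quadForm {p : ℕ} (I : Matrix (Fin p) (Fin p) ℝ)
    (s t : EuclideanSpace ℝ (Fin p)) : ℝ := ∑ i, ∑ j, s i * I i j * t j

/-!
Along the segment `u ↦ γ̂ + u h`, `h = t / √n`, a second-order Taylor bound with the third
derivative bounded by `M n` gives `G(γ̂ + h) - G(γ̂) ≤ D²G(γ̂)[h, h] / 2 + M n ‖h‖³ / 6`, the
gradient term vanishing at the critical point. The Hessian hypothesis bounds the first term by
`(η ‖t‖² - tᵀ I t) / 2` and `‖t‖ ≤ δ √n` bounds the second by `M δ ‖t‖² / 6`; then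
`η / 2 + M δ / 6 ≤ λ / 4` and `tᵀ I t ≥ λ ‖t‖²` leave `-(1/4) tᵀ I t`.
-/

open Set

/-- The auxiliary function `ψ u = φ u + (1 - u) φ' u - (a (u - u²/2) + c (u²/2 - u³/3))` has
derivative `(1 - u) (φ'' u - a - c u) ≤ 0`, and `ψ 1 ≤ ψ 0` is the claim. -/
theorem sub_le_of_hasDerivAt_of_hasDerivAt_le_affine {φ q r : ℝ → ℝ} {a c : ℝ}
    (hφ : ∀ u ∈ Icc (0 : ℝ) 1, HasDerivAt φ (q u) u)
    (hq : ∀ u ∈ Icc (0 : ℝ) 1, HasDerivAt q (r u) u)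
    (hr : ∀ u ∈ Icc (0 : ℝ) 1, r u ≤ a + c * u) :
    φ 1 - φ 0 ≤ q 0 + a / 2 + c / 6 := by
  set ψ : ℝ → ℝ := fun u =>
    φ u + (1 - u) * q u - (a * (u - u ^ 2 / 2) + c * (u ^ 2 / 2 - u ^ 3 / 3))
  have hψ : ∀ u ∈ Icc (0 : ℝ) 1, HasDerivAt ψ ((1 - u) * (r u - a - c * u)) u := by
    intro u hu
    have hpoly : HasDerivAt (fun y : ℝ => a * (y - y ^ 2 / 2) + c * (y ^ 2 / 2 - y ^ 3 / 3))
        (a * (1 - u) + c * (u - u ^ 2)) u := by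
      have h2 := (hasDerivAt_pow 2 u).div_const 2
      have h3 := (hasDerivAt_pow 3 u).div_const 3
      refine ((((hasDerivAt_id' u).fun_sub h2).const_mul a).fun_add
        ((h2.fun_sub h3).const_mul c)).congr_deriv ?_
      norm_num
    have hmul := ((hasDerivAt_id' u).const_sub 1).mul (hq u hu)
    refine (((hφ u hu).add hmul).sub hpoly).congr_deriv ?_
    ring
  have hanti : AntitoneOn ψ (Icc (0 : ℝ) 1) := by
    refine antitoneOn_of_deriv_nonpos (convex_Icc 0 1)
      (fun u hu => (hψ u hu).continuousAt.continuousWithinAt) ?_ ?_ <;>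
      rw [interior_Icc] <;> intro u hu
    · exact (hψ u (Ioo_subset_Icc_self hu)).differentiableAt.differentiableWithinAt
    · rw [(hψ u (Ioo_subset_Icc_self hu)).deriv]
      exact mul_nonpos_of_nonneg_of_nonpos (by linarith [hu.2])
        (by linarith [hr u (Ioo_subset_Icc_self hu)])
  have h01 := hanti (left_mem_Icc.2 zero_le_one) (right_mem_Icc.2 zero_le_one) zero_le_one
  simp only [ψ] at h01
  linarith

namespace ContinuousMultilinearMap

variable {E : Type*} [NormedAddCommGroup E] [NormedSpace ℝ E]

theorem apply_pair_self_le (A : ContinuousMultilinearMap ℝ (fun _ : Fin 2 => E) ℝ) (h : E) :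
    A ![h, h] ≤ ‖A‖ * ‖h‖ ^ 2 := by
  have := A.le_opNorm ![h, h]
  simp only [Fin.prod_univ_two, Matrix.cons_val_zero, Matrix.cons_val_one] at this
  rw [sq]
  exact (le_abs_self _).trans this

theorem apply_pair_smul_self (A : ContinuousMultilinearMap ℝ (fun _ : Fin 2 => E) ℝ)
    (c : ℝ) (h : E) : A ![c • h, c • h] = c ^ 2 * A ![h, h] := by
  have hsmul : (![c • h, c • h] : Fin 2 → E) = fun i => c • ![h, h] i := by
    ext i; fin_cases i <;> rfl
  rw [hsmul, A.map_smul_univ, Fin.prod_univ_two, smul_eq_mul, sq]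

end ContinuousMultilinearMap

section Taylor

variable {E : Type*} [NormedAddCommGroup E] [NormedSpace ℝ E] {s : Set E}

theorem IsOpen.hasFDerivAt_fderivWithin {F : Type*} [NormedAddCommGroup F] [NormedSpace ℝ F]
    {f : E → F} (hs : IsOpen s) (hf : DifferentiableOn ℝ f s) {y : E} (hy : y ∈ s) :
    HasFDerivAt f (fderivWithin ℝ f s y) y :=
  (hf y hy).hasFDerivWithinAt.hasFDerivAt (hs.mem_nhds hy)

theorem Convex.sub_le_of_norm_iteratedFDerivWithin_three_le {G : E → ℝ} (hso : IsOpen s)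
    (hsc : Convex ℝ s) (hG : ContDiffOn ℝ 3 G s) {K : ℝ}
    (hK : ∀ y ∈ s, ‖iteratedFDerivWithin ℝ 3 G s y‖ ≤ K) {x h : E} (hx : x ∈ s)
    (hxh : x + h ∈ s) :
    G (x + h) - G x ≤
      fderivWithin ℝ G s x h + iteratedFDerivWithin ℝ 2 G s x ![h, h] / 2 + K * ‖h‖ ^ 3 / 6 := by
  have hud : UniqueDiffOn ℝ s := hso.uniqueDiffOn
  set D2 := iteratedFDerivWithin ℝ 2 G s
  have hseg : ∀ u ∈ Icc (0 : ℝ) 1, x + u • h ∈ s := fun u hu => hsc.add_smul_mem hx hxh hu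
  have hline : ∀ u : ℝ, HasDerivAt (fun u : ℝ => x + u • h) h u := fun u => by
    simpa using ((hasDerivAt_id u).smul_const h).const_add x
  have hD2_lip : ∀ y ∈ s, ‖D2 y - D2 x‖ ≤ K * ‖y - x‖ := fun y hy =>
    hsc.norm_image_sub_le_of_norm_fderivWithin_le
      (hG.differentiableOn_iteratedFDerivWithin (by norm_num) hud)
      (fun z hz => (norm_fderivWithin_iteratedFDerivWithin).trans_le (hK z hz)) hx hy
  have hbound := sub_le_of_hasDerivAt_of_hasDerivAt_le_affine (φ := fun u => G (x + u • h))
    (q := fun u => fderivWithin ℝ G s (x + u • h) h) (r := fun u => D2 (x + u • h) ![h, h])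
    (a := D2 x ![h, h]) (c := K * ‖h‖ ^ 3) (fun u hu => ?_) (fun u hu => ?_) (fun u hu => ?_)
  · simpa using hbound
  · exact (hso.hasFDerivAt_fderivWithin (hG.differentiableOn (by norm_num)) (hseg u hu)
      ).comp_hasDerivAt u (hline u)
  · have hD1 := (hso.hasFDerivAt_fderivWithin ((hG.fderivWithin hud (m := 2) (by norm_num)
      ).differentiableOn (by norm_num)) (hseg u hu)).comp_hasDerivAt u (hline u)
    refine (hD1.clm_apply (hasDerivAt_const u h)).congr_deriv ?_
    simp [D2, iteratedFDerivWithin_two_apply G hud (hseg u hu)]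
  · have hdiff := (D2 (x + u • h) - D2 x).apply_pair_self_le h
    have hnorm : ‖D2 (x + u • h) - D2 x‖ * ‖h‖ ^ 2 ≤ K * ‖h‖ ^ 3 * u := by
      calc ‖D2 (x + u • h) - D2 x‖ * ‖h‖ ^ 2 ≤ K * ‖u • h‖ * ‖h‖ ^ 2 := by
            gcongr; simpa using hD2_lip _ (hseg u hu)
        _ = K * ‖h‖ ^ 3 * u := by rw [norm_smul, Real.norm_of_nonneg hu.1]; ring
    rw [sub_apply] at hdiff
    linarith

end Taylor

theorem central_region_domination_general {p : ℕ} (Θ : Set (EuclideanSpace ℝ (Fin p)))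
    (hΘo : IsOpen Θ) (hΘc : Convex ℝ Θ)
    (I : Matrix (Fin p) (Fin p) ℝ)
    (lam : ℝ)
    (hlam' : ∀ v : EuclideanSpace ℝ (Fin p), lam * ‖v‖ ^ 2 ≤ quadForm I v v)
    (M : ℝ) (hM : 0 < M) (η : ℝ) (δ : ℝ)
    (hcond : η / 2 + M * δ / 6 ≤ lam / 4)
    (n : ℕ) (hn : 1 ≤ n)
    (Gn : EuclideanSpace ℝ (Fin p) → ℝ) (hGn : ContDiffOn ℝ 3 Gn Θ)
    (hG3 : ∀ γ ∈ Θ, ‖iteratedFDerivWithin ℝ 3 Gn Θ γ‖ ≤ M * n)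
    (γh : EuclideanSpace ℝ (Fin p)) (hγh : γh ∈ Θ)
    (hcrit : fderivWithin ℝ Gn Θ γh = 0)
    (B : ContinuousMultilinearMap ℝ (fun _ : Fin 2 => EuclideanSpace ℝ (Fin p)) ℝ)
    (hB : ∀ s t, B ![s, t] = quadForm I s t)
    (hhess : ‖(n : ℝ)⁻¹ • iteratedFDerivWithin ℝ 2 Gn Θ γh + B‖ ≤ η) :
    ∀ t : EuclideanSpace ℝ (Fin p), ‖t‖ ≤ δ * Real.sqrt n →
      γh + (Real.sqrt n)⁻¹ • t ∈ Θ →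
      Gn (γh + (Real.sqrt n)⁻¹ • t) - Gn γh ≤ -(1 / 4) * quadForm I t t := by
  intro t ht hmem
  have hsqrt : 0 < Real.sqrt n := Real.sqrt_pos.2 (by exact_mod_cast hn)
  set c := (Real.sqrt n)⁻¹
  have hc2 : c ^ 2 = (n : ℝ)⁻¹ := by rw [inv_pow, Real.sq_sqrt (Nat.cast_nonneg n)]
  have htaylor := hΘc.sub_le_of_norm_iteratedFDerivWithin_three_le hΘo hGn hG3 hγh hmem
  rw [hcrit, zero_apply, zero_add,
    ContinuousMultilinearMap.apply_pair_smul_self, hc2] at htaylor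
  have hhess_t : (n : ℝ)⁻¹ * iteratedFDerivWithin ℝ 2 Gn Θ γh ![t, t] + quadForm I t t
      ≤ η * ‖t‖ ^ 2 := by
    have := ((n : ℝ)⁻¹ • iteratedFDerivWithin ℝ 2 Gn Θ γh + B).apply_pair_self_le t
    simpa [hB] using this.trans (mul_le_mul_of_nonneg_right hhess (sq_nonneg _))
  have hcube : M * n * ‖c • t‖ ^ 3 ≤ M * δ * ‖t‖ ^ 2 := by
    have hct : c * ‖t‖ ≤ δ := (inv_mul_le_iff₀ hsqrt).2 (ht.trans_eq (mul_comm _ _))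
    calc M * n * ‖c • t‖ ^ 3 = M * (n * c ^ 2) * (c * ‖t‖) * ‖t‖ ^ 2 := by
          rw [norm_smul, Real.norm_of_nonneg (inv_pos.2 hsqrt).le]; ring
      _ ≤ M * δ * ‖t‖ ^ 2 := by
          rw [hc2, mul_inv_cancel₀ (by positivity), mul_one]; gcongr
  have hcond_t := mul_le_mul_of_nonneg_right hcond (sq_nonneg ‖t‖)
  linarith [hlam' t]

/-- domination bound on the central integration region
`D₁ₙ = {t : |t| ≤ δ√n}` in the Laplace-type expansion. -/
theorem central_region_domination {p : ℕ} (Θ : Set (EuclideanSpace ℝ (Fin p)))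
    (hΘo : IsOpen Θ) (hΘc : Convex ℝ Θ)
    (I : Matrix (Fin p) (Fin p) ℝ) (hsymm : I.IsSymm) (hpd : I.PosDef)
    (lam : ℝ) (hlam : 0 < lam)
    (hlam' : ∀ v : EuclideanSpace ℝ (Fin p), lam * ‖v‖ ^ 2 ≤ quadForm I v v)
    (M : ℝ) (hM : 0 < M) (η : ℝ) (hη : 0 ≤ η) (δ : ℝ) (hδ : 0 < δ)
    (hcond : η / 2 + M * δ / 6 ≤ lam / 4)
    (n : ℕ) (hn : 1 ≤ n)
    (Gn : EuclideanSpace ℝ (Fin p) → ℝ) (hGn : ContDiffOn ℝ 3 Gn Θ)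
    (hG3 : ∀ γ ∈ Θ, ‖iteratedFDerivWithin ℝ 3 Gn Θ γ‖ ≤ M * n)
    (γh : EuclideanSpace ℝ (Fin p)) (hγh : γh ∈ Θ)
    (hcrit : fderivWithin ℝ Gn Θ γh = 0)
    (B : ContinuousMultilinearMap ℝ (fun _ : Fin 2 => EuclideanSpace ℝ (Fin p)) ℝ)
    (hB : ∀ s t, B ![s, t] = quadForm I s t)
    (hhess : ‖(n : ℝ)⁻¹ • iteratedFDerivWithin ℝ 2 Gn Θ γh + B‖ ≤ η) :
    ∀ t : EuclideanSpace ℝ (Fin p), ‖t‖ ≤ δ * Real.sqrt n →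
      γh + (Real.sqrt n)⁻¹ • t ∈ Θ →
      Gn (γh + (Real.sqrt n)⁻¹ • t) - Gn γh ≤ -(1 / 4) * quadForm I t t :=
  central_region_domination_general Θ hΘo hΘc I lam hlam' M hM η δ hcond n hn Gn hGn hG3 γh hγh
    hcrit B hB hhess
end

section
/- Let Θ ⊆ ℝ^p be open and convex, let I be a p×p real symmetric positive definite matrix, let γ⋆ ∈ Θ, let M > 0, and let π : ℝ^p → [0,∞) be continuous at γ⋆. For each n ≥ 1, let G_n : Θ → ℝ be three times continuously differentiable with sup_{γ∈Θ} ‖∂³G_n(γ)‖ ≤ M·n, and let γ̂_n ∈ Θ satisfy ∂G_n(γ̂_n) = 0. Assume γ̂_n → γ⋆ and (1/n)·∂²G_n(γ̂_n) → −I as n → ∞. Then for every fixed t ∈ ℝ^p, one has γ̂_n + t/√n ∈ Θ for all sufficiently large n, and exp(G_n(γ̂_n + t/√n) − G_n(γ̂_n)) · π(γ̂_n + t/√n) → exp(−(1/2)·tᵀ I t) · π(γ⋆) as n → ∞. -/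
/-!
At the critical point `γ̂ₙ` the linear term of Taylor's formula vanishes, so
`Gₙ(γ̂ₙ + t/√n) - Gₙ(γ̂ₙ) = ½ (n⁻¹ ∂²Gₙ(γ̂ₙ))(t, t) + R` with `|R| ≤ M n ‖t/√n‖³ = M ‖t‖³ / √n`.
Hence the exponent tends to `-½ tᵀ I t`, while `γ̂ₙ + t/√n → γ⋆` and continuity of the prior at
`γ⋆` handle the second factor.
-/

open MeasureTheory Filter Topology

open Set

theorem ContinuousMultilinearMap.apply_smul_smul_two {R E F : Type*} [NormedField R]
    [SeminormedAddCommGroup E] [NormedSpace R E] [SeminormedAddCommGroup F] [NormedSpace R F]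
    (A : ContinuousMultilinearMap R (fun _ : Fin 2 => E) F) (c : R) (x y : E) :
    A ![c • x, c • y] = c ^ 2 • A ![x, y] := by
  have hsmul : ![c • x, c • y] = fun i => c • ![x, y] i := by
    funext i; fin_cases i <;> rfl
  rw [hsmul, A.map_smul_univ, Finset.prod_const, Finset.card_univ, Fintype.card_fin]

theorem tendsto_inv_sqrt_natCast_atTop : Tendsto (fun n : ℕ => (Real.sqrt n)⁻¹) atTop (𝓝 0) :=
  tendsto_inv_atTop_zero.comp (Real.tendsto_sqrt_atTop.comp tendsto_natCast_atTop_atTop)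

section Taylor

variable {E F : Type*} [NormedAddCommGroup E] [NormedSpace ℝ E]
  [NormedAddCommGroup F] [NormedSpace ℝ F] {s : Set E} {K : ℝ}

theorem Convex.norm_sub_sub_fderiv_le (hs : Convex ℝ s) {g : E → F}
    (hg : ∀ x ∈ s, DifferentiableAt ℝ g x) (hg' : ∀ x ∈ s, DifferentiableAt ℝ (fderiv ℝ g) x)
    (hK : ∀ x ∈ s, ‖fderiv ℝ (fderiv ℝ g) x‖ ≤ K) {a x : E} (ha : a ∈ s) (hx : x ∈ s) :
    ‖g x - g a - fderiv ℝ g a (x - a)‖ ≤ K * ‖x - a‖ ^ 2 := by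
  have hseg : segment ℝ a x ⊆ s := hs.segment_subset ha hx
  have hK0 : 0 ≤ K := (norm_nonneg (fderiv ℝ (fderiv ℝ g) a)).trans (hK a ha)
  have hlip : ∀ y ∈ segment ℝ a x, ‖fderiv ℝ g y - fderiv ℝ g a‖ ≤ K * ‖x - a‖ := fun y hy =>
    calc ‖fderiv ℝ g y - fderiv ℝ g a‖ ≤ K * ‖y - a‖ :=
          hs.norm_image_sub_le_of_norm_fderiv_le hg' hK ha (hseg hy)
      _ ≤ K * ‖x - a‖ := by gcongr; exact norm_sub_le_of_mem_segment hy
  calc ‖g x - g a - fderiv ℝ g a (x - a)‖ ≤ K * ‖x - a‖ * ‖x - a‖ :=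
        (convex_segment a x).norm_image_sub_le_of_norm_hasFDerivWithin_le'
          (fun y hy => (hg y (hseg hy)).hasFDerivAt.hasFDerivWithinAt) hlip
          (left_mem_segment ℝ a x) (right_mem_segment ℝ a x)
    _ = K * ‖x - a‖ ^ 2 := by ring

theorem Convex.norm_taylor_two_le (hs : Convex ℝ s) (hso : IsOpen s) {f : E → F}
    (hf : ContDiffOn ℝ 3 f s) (hK : ∀ x ∈ s, ‖iteratedFDerivWithin ℝ 3 f s x‖ ≤ K)
    {a h : E} (ha : a ∈ s) (hah : a + h ∈ s) :
    ‖f (a + h) - f a - fderivWithin ℝ f s a h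
        - (1 / 2 : ℝ) • iteratedFDerivWithin ℝ 2 f s a ![h, h]‖ ≤ K * ‖h‖ ^ 3 := by
  have hf3 : ∀ x ∈ s, ContDiffAt ℝ 3 f x := fun x hx => hf.contDiffAt (hso.mem_nhds hx)
  have hseg : ∀ τ ∈ Icc (0 : ℝ) 1, a + τ • h ∈ s := fun τ hτ =>
    hs.add_smul_mem ha hah hτ
  set D2 := fderiv ℝ (fderiv ℝ f) a
  have hfirst : ∀ τ ∈ Icc (0 : ℝ) 1,
      ‖fderiv ℝ f (a + τ • h) - fderiv ℝ f a - D2 (τ • h)‖ ≤ K * ‖h‖ ^ 2 := by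
    intro τ hτ
    have hrem := hs.norm_sub_sub_fderiv_le (g := fderiv ℝ f) (K := K)
      (fun x hx => ((hf3 x hx).fderiv_right (m := 2) (by norm_num)).differentiableAt
        (by norm_num))
      (fun x hx => (((hf3 x hx).fderiv_right (m := 2) (by norm_num)).fderiv_right (m := 1)
        (by norm_num)).differentiableAt (by norm_num))
      (fun x hx => by
        rw [← norm_iteratedFDeriv_one, norm_iteratedFDeriv_fderiv, norm_iteratedFDeriv_fderiv,
          ← iteratedFDerivWithin_of_isOpen 3 hso hx]
        exact hK x hx) ha (hseg τ hτ)
    rw [add_sub_cancel_left] at hrem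
    refine hrem.trans (mul_le_mul_of_nonneg_left ?_ ((norm_nonneg _).trans (hK a ha)))
    rw [norm_smul, Real.norm_of_nonneg hτ.1]
    exact pow_le_pow_left₀ (mul_nonneg hτ.1 (norm_nonneg h))
      (mul_le_of_le_one_left (norm_nonneg h) hτ.2) 2
  have hderiv : ∀ τ ∈ Icc (0 : ℝ) 1, HasDerivWithinAt
      (fun τ : ℝ => f (a + τ • h) - τ • fderiv ℝ f a h - (τ ^ 2 / 2) • D2 h h)
      ((fderiv ℝ f (a + τ • h) - fderiv ℝ f a - D2 (τ • h)) h) (Icc 0 1) τ := by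
    intro τ hτ
    have hline : HasDerivAt (fun τ : ℝ => a + τ • h) h τ := by
      simpa using ((hasDerivAt_id τ).smul_const h).const_add a
    have hsq : HasDerivAt (fun τ : ℝ => τ ^ 2 / 2) τ τ := by
      simpa using (hasDerivAt_pow 2 τ).div_const 2
    have hcomp := (((hf3 _ (hseg τ hτ)).differentiableAt (by norm_num)).hasFDerivAt.comp_hasDerivAt τ
      hline).sub ((hasDerivAt_id τ).smul_const (fderiv ℝ f a h)) |>.sub (hsq.smul_const (D2 h h))
    convert hcomp.hasDerivWithinAt using 1
    · rfl
    · simp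
  have hmvt := norm_image_sub_le_of_norm_deriv_le_segment_01' hderiv fun τ hτ =>
    calc ‖(fderiv ℝ f (a + τ • h) - fderiv ℝ f a - D2 (τ • h)) h‖
        ≤ ‖fderiv ℝ f (a + τ • h) - fderiv ℝ f a - D2 (τ • h)‖ * ‖h‖ :=
          ContinuousLinearMap.le_opNorm _ _
      _ ≤ K * ‖h‖ ^ 2 * ‖h‖ := by gcongr; exact hfirst τ (Ico_subset_Icc_self hτ)
      _ = K * ‖h‖ ^ 3 := by ring
  rw [fderivWithin_of_isOpen hso ha, iteratedFDerivWithin_of_isOpen 2 hso ha,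
    iteratedFDeriv_two_apply]
  convert hmvt using 2
  simp only [one_smul, zero_smul, add_zero, sub_zero, one_pow, zero_pow two_ne_zero, zero_div,
    Matrix.cons_val_zero, Matrix.cons_val_one]
  abel

theorem tendsto_sub_at_critical_point_of_rescaled_hessian (hs : Convex ℝ s) (hso : IsOpen s)
    {M : ℝ} {f : ℕ → E → F} (hf : ∀ n, 1 ≤ n → ContDiffOn ℝ 3 (f n) s)
    (hf3 : ∀ n, 1 ≤ n → ∀ x ∈ s, ‖iteratedFDerivWithin ℝ 3 (f n) s x‖ ≤ M * n)
    {a : ℕ → E} (ha : ∀ n, a n ∈ s) (hcrit : ∀ n, fderivWithin ℝ (f n) s (a n) = 0)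
    {A : ContinuousMultilinearMap ℝ (fun _ : Fin 2 => E) F}
    (hhess : Tendsto (fun n : ℕ => (n : ℝ)⁻¹ • iteratedFDerivWithin ℝ 2 (f n) s (a n))
      atTop (𝓝 A))
    {t : E} (ht : ∀ᶠ n in atTop, a n + (Real.sqrt n)⁻¹ • t ∈ s) :
    Tendsto (fun n : ℕ => f n (a n + (Real.sqrt n)⁻¹ • t) - f n (a n)) atTop
      (𝓝 ((1 / 2 : ℝ) • A ![t, t])) := by
  have hquad : Tendsto (fun n : ℕ =>
      (1 / 2 : ℝ) • ((n : ℝ)⁻¹ • iteratedFDerivWithin ℝ 2 (f n) s (a n)) ![t, t])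
      atTop (𝓝 ((1 / 2 : ℝ) • A ![t, t])) :=
    (((ContinuousMultilinearMap.apply ℝ _ F ![t, t]).continuous.tendsto A).comp hhess).const_smul _
  have hrem : Tendsto (fun n : ℕ => f n (a n + (Real.sqrt n)⁻¹ • t) - f n (a n)
      - (1 / 2 : ℝ) • ((n : ℝ)⁻¹ • iteratedFDerivWithin ℝ 2 (f n) s (a n)) ![t, t])
      atTop (𝓝 0) := by
    refine squeeze_zero_norm' ?_
      (by simpa using tendsto_inv_sqrt_natCast_atTop.const_mul (M * ‖t‖ ^ 3))
    filter_upwards [ht, eventually_ge_atTop 1] with n hn hn1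
    have hsqrt : 0 < Real.sqrt n := Real.sqrt_pos.2 (by exact_mod_cast hn1)
    have htaylor := hs.norm_taylor_two_le hso (hf n hn1) (hf3 n hn1) (ha n) hn
    rw [hcrit n, zero_apply, sub_zero, ContinuousMultilinearMap.apply_smul_smul_two, inv_pow,
      Real.sq_sqrt n.cast_nonneg, ← smul_apply, norm_smul, norm_inv,
      Real.norm_of_nonneg hsqrt.le] at htaylor
    refine htaylor.trans_eq ?_
    have hn_sq : (n : ℝ) = Real.sqrt n ^ 2 := (Real.sq_sqrt n.cast_nonneg).symm
    set r := Real.sqrt n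
    rw [hn_sq]
    field_simp
  simpa using hrem.add hquad

end Taylor

theorem central_integrand_pointwise_limit_general {p : ℕ} (Θ : Set (EuclideanSpace ℝ (Fin p)))
    (hΘo : IsOpen Θ) (hΘc : Convex ℝ Θ)
    (I : Matrix (Fin p) (Fin p) ℝ)
    (B : ContinuousMultilinearMap ℝ (fun _ : Fin 2 => EuclideanSpace ℝ (Fin p)) ℝ)
    (hB : ∀ s t, B ![s, t] = quadForm I s t)
    (γs : EuclideanSpace ℝ (Fin p)) (hγs : γs ∈ Θ) (M : ℝ)
    (pr : EuclideanSpace ℝ (Fin p) → ℝ)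
    (hprc : ContinuousAt pr γs)
    (Gn : ℕ → EuclideanSpace ℝ (Fin p) → ℝ)
    (hGn : ∀ n, 1 ≤ n → ContDiffOn ℝ 3 (Gn n) Θ)
    (hG3 : ∀ n, 1 ≤ n → ∀ γ ∈ Θ, ‖iteratedFDerivWithin ℝ 3 (Gn n) Θ γ‖ ≤ M * n)
    (γh : ℕ → EuclideanSpace ℝ (Fin p)) (hγh : ∀ n, γh n ∈ Θ)
    (hcrit : ∀ n, fderivWithin ℝ (Gn n) Θ (γh n) = 0)
    (hγcons : Tendsto γh atTop (𝓝 γs))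
    (hhess : Tendsto (fun n : ℕ => (n : ℝ)⁻¹ • iteratedFDerivWithin ℝ 2 (Gn n) Θ (γh n))
      atTop (𝓝 (-B))) :
    ∀ t : EuclideanSpace ℝ (Fin p),
      (∀ᶠ n in atTop, γh n + (Real.sqrt n)⁻¹ • t ∈ Θ) ∧
      Tendsto (fun n =>
          Real.exp (Gn n (γh n + (Real.sqrt n)⁻¹ • t) - Gn n (γh n)) *
            pr (γh n + (Real.sqrt n)⁻¹ • t))
        atTop (𝓝 (Real.exp (-(1 / 2) * quadForm I t t) * pr γs)) := by
  intro t
  have hpoint : Tendsto (fun n : ℕ => γh n + (Real.sqrt n)⁻¹ • t) atTop (𝓝 γs) := by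
    simpa using hγcons.add (tendsto_inv_sqrt_natCast_atTop.smul_const t)
  have hmem : ∀ᶠ n in atTop, γh n + (Real.sqrt n)⁻¹ • t ∈ Θ :=
    hpoint.eventually (hΘo.eventually_mem hγs)
  refine ⟨hmem, ?_⟩
  have hincr := tendsto_sub_at_critical_point_of_rescaled_hessian hΘc hΘo hGn hG3 hγh hcrit
    hhess hmem
  rw [neg_apply, hB, smul_eq_mul, mul_neg, ← neg_mul] at hincr
  exact ((Real.continuous_exp.tendsto _).comp hincr).mul (hprc.tendsto.comp hpoint)

/-- pointwise convergence of the rescaled integrand on the central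
region in the Laplace-type expansion. -/
theorem central_integrand_pointwise_limit {p : ℕ} (Θ : Set (EuclideanSpace ℝ (Fin p)))
    (hΘo : IsOpen Θ) (hΘc : Convex ℝ Θ)
    (I : Matrix (Fin p) (Fin p) ℝ) (hsymm : I.IsSymm) (hpd : I.PosDef)
    (B : ContinuousMultilinearMap ℝ (fun _ : Fin 2 => EuclideanSpace ℝ (Fin p)) ℝ)
    (hB : ∀ s t, B ![s, t] = quadForm I s t)
    (γs : EuclideanSpace ℝ (Fin p)) (hγs : γs ∈ Θ) (M : ℝ) (hM : 0 < M)
    (pr : EuclideanSpace ℝ (Fin p) → ℝ) (hpr0 : ∀ x, 0 ≤ pr x)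
    (hprc : ContinuousAt pr γs)
    (Gn : ℕ → EuclideanSpace ℝ (Fin p) → ℝ)
    (hGn : ∀ n, 1 ≤ n → ContDiffOn ℝ 3 (Gn n) Θ)
    (hG3 : ∀ n, 1 ≤ n → ∀ γ ∈ Θ, ‖iteratedFDerivWithin ℝ 3 (Gn n) Θ γ‖ ≤ M * n)
    (γh : ℕ → EuclideanSpace ℝ (Fin p)) (hγh : ∀ n, γh n ∈ Θ)
    (hcrit : ∀ n, fderivWithin ℝ (Gn n) Θ (γh n) = 0)
    (hγcons : Tendsto γh atTop (𝓝 γs))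
    (hhess : Tendsto (fun n : ℕ => (n : ℝ)⁻¹ • iteratedFDerivWithin ℝ 2 (Gn n) Θ (γh n))
      atTop (𝓝 (-B))) :
    ∀ t : EuclideanSpace ℝ (Fin p),
      (∀ᶠ n in atTop, γh n + (Real.sqrt n)⁻¹ • t ∈ Θ) ∧
      Tendsto (fun n =>
          Real.exp (Gn n (γh n + (Real.sqrt n)⁻¹ • t) - Gn n (γh n)) *
            pr (γh n + (Real.sqrt n)⁻¹ • t))
        atTop (𝓝 (Real.exp (-(1 / 2) * quadForm I t t) * pr γs)) :=
  central_integrand_pointwise_limit_general Θ hΘo hΘc I B hB γs hγs M pr hprc Gn hGn hG3 γh hγh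
    hcrit hγcons hhess
end

section
/- Let Θ ⊆ ℝ^p be a bounded set, let G : Θ → ℝ, let γ⋆ ∈ Θ and χ > 0 satisfy G(γ) − G(γ⋆) ≤ −χ·|γ − γ⋆|² for all γ ∈ Θ, and suppose G is continuous at γ⋆. For each n, let G_n : Θ → ℝ and γ̂_n ∈ Θ, and set ε_n := sup_{γ∈Θ} |(1/n)G_n(γ) − G(γ)|. Assume ε_n → 0 and γ̂_n → γ⋆. Then for every δ > 0 there exist ε'' > 0 and N ∈ ℕ such that for all n ≥ N and all t ∈ ℝ^p with |t| ≥ δ√n and γ̂_n + t/√n ∈ Θ, one has (1/n)·(G_n(γ̂_n + t/√n) − G_n(γ̂_n)) < −ε''. -/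
/-!
Write `γ = γ̂ₙ + t/√n`, so `‖γ - γ̂ₙ‖ ≥ δ`. Once `γ̂ₙ` is within `δ/2` of `γ⋆`, the point `γ`
stays at distance `δ/2` from `γ⋆`, and identifiability gives `G γ - G γ⋆ ≤ -χ (δ/2)²`.
Replacing `Gₙ/n` by `G` at `γ` and `γ̂ₙ` costs at most `2 εₙ`, and `G γ⋆ - G γ̂ₙ` is small by
continuity, so both errors eventually fit into a quarter of the gap `χ (δ/2)²`.
-/

open Filter Topology

lemma sub_le_sub_add_two_mul_of_abs_sub_le {a a' b b' e : ℝ}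
    (h : |a - b| ≤ e) (h' : |a' - b'| ≤ e) : a - a' ≤ b - b' + 2 * e := by
  linarith [(abs_le.mp h).2, (abs_le.mp h').1]

lemma le_norm_inv_smul_of_mul_le {E : Type*} [SeminormedAddCommGroup E] [NormedSpace ℝ E]
    {c δ : ℝ} (hc : 0 < c) {t : E} (ht : δ * c ≤ ‖t‖) : δ ≤ ‖c⁻¹ • t‖ := by
  rwa [norm_smul, Real.norm_eq_abs, abs_of_pos (inv_pos.mpr hc), inv_mul_eq_div,
    le_div_iff₀ hc]

section Identifiability

variable {E : Type*} [SeminormedAddCommGroup E] {Θ : Set E} {G : E → ℝ} {γs : E} {χ : ℝ}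

lemma sub_le_neg_mul_sq_of_le_norm_sub (hχ : 0 ≤ χ)
    (hG : ∀ γ ∈ Θ, G γ - G γs ≤ -χ * ‖γ - γs‖ ^ 2) {γ : E} (hγ : γ ∈ Θ) {r : ℝ} (hr : 0 ≤ r)
    (hfar : r ≤ ‖γ - γs‖) : G γ - G γs ≤ -χ * r ^ 2 := by
  have : χ * r ^ 2 ≤ χ * ‖γ - γs‖ ^ 2 := by gcongr
  linarith [hG γ hγ]

lemma sub_le_of_uniform_approx (hχ : 0 ≤ χ)
    (hG : ∀ γ ∈ Θ, G γ - G γs ≤ -χ * ‖γ - γs‖ ^ 2) {F : E → ℝ} {e : ℝ}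
    (hF : ∀ γ ∈ Θ, |F γ - G γ| ≤ e) {γ γh : E} (hγ : γ ∈ Θ) (hγh : γh ∈ Θ) {δ : ℝ}
    (hδ : 0 ≤ δ) (hfar : δ ≤ ‖γ - γh‖) (hnear : ‖γh - γs‖ ≤ δ / 2) :
    F γ - F γh ≤ -χ * (δ / 2) ^ 2 + (G γs - G γh) + 2 * e := by
  have hfar' : δ / 2 ≤ ‖γ - γs‖ := by
    linarith [norm_sub_le_norm_sub_add_norm_sub γ γs γh, norm_sub_rev γs γh]
  have hgap := sub_le_neg_mul_sq_of_le_norm_sub hχ hG hγ (by positivity) hfar'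
  linarith [sub_le_sub_add_two_mul_of_abs_sub_le (hF γ hγ) (hF γh hγh)]

end Identifiability

theorem tail_region_gap_general {p : ℕ} (Θ : Set (EuclideanSpace ℝ (Fin p)))
    (G : EuclideanSpace ℝ (Fin p) → ℝ)
    (γs : EuclideanSpace ℝ (Fin p)) (χ : ℝ) (hχ : 0 < χ)
    (hG : ∀ γ ∈ Θ, G γ - G γs ≤ -χ * ‖γ - γs‖ ^ 2)
    (hGcont : ContinuousWithinAt G Θ γs)
    (Gn : ℕ → EuclideanSpace ℝ (Fin p) → ℝ)
    (γh : ℕ → EuclideanSpace ℝ (Fin p)) (hγh : ∀ n, γh n ∈ Θ)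
    (ε : ℕ → ℝ) (hε : ∀ n : ℕ, ∀ γ ∈ Θ, |(n : ℝ)⁻¹ * Gn n γ - G γ| ≤ ε n)
    (hε0 : Tendsto ε atTop (𝓝 0))
    (hγcons : Tendsto γh atTop (𝓝 γs)) :
    ∀ δ > (0 : ℝ), ∃ ε'' > (0 : ℝ), ∃ N : ℕ, ∀ n ≥ N,
      ∀ t : EuclideanSpace ℝ (Fin p), δ * Real.sqrt n ≤ ‖t‖ →
        γh n + (Real.sqrt n)⁻¹ • t ∈ Θ →
        (n : ℝ)⁻¹ * (Gn n (γh n + (Real.sqrt n)⁻¹ • t) - Gn n (γh n)) < -ε'' := by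
  intro δ hδ
  have hη : 0 < χ * (δ / 2) ^ 2 / 4 := by positivity
  refine ⟨χ * (δ / 2) ^ 2 / 4, hη, ?_⟩
  have hGγh : Tendsto (fun n ↦ G (γh n)) atTop (𝓝 (G γs)) :=
    hGcont.tendsto.comp (tendsto_nhdsWithin_iff.mpr ⟨hγcons, .of_forall hγh⟩)
  obtain ⟨N, hN⟩ := eventually_atTop.mp <|
    (hε0.eventually (gt_mem_nhds hη)).and <|
    (hGγh.eventually (lt_mem_nhds (sub_lt_self _ hη))).and <|
    (hγcons.eventually (Metric.closedBall_mem_nhds γs (by positivity : 0 < δ / 2))).and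
    (eventually_gt_atTop 0)
  refine ⟨N, fun n hn t ht hmem ↦ ?_⟩
  obtain ⟨hεn, hGn, hnear, hn0⟩ := hN n hn
  have hfar : δ ≤ ‖γh n + (Real.sqrt n)⁻¹ • t - γh n‖ := by
    rw [add_sub_cancel_left]
    exact le_norm_inv_smul_of_mul_le (Real.sqrt_pos.mpr (Nat.cast_pos.mpr hn0)) ht
  have hincr := sub_le_of_uniform_approx hχ.le hG (hε n) hmem (hγh n) hδ.le hfar
    (mem_closedBall_iff_norm.mp hnear)
  rw [mul_sub]
  linarith

/-- exponential gap estimate on the tail region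
`D₂ₙ = {t : |t| ≥ δ√n}` coming from the identifiability condition. -/
theorem tail_region_gap {p : ℕ} (Θ : Set (EuclideanSpace ℝ (Fin p)))
    (hΘb : Bornology.IsBounded Θ)
    (G : EuclideanSpace ℝ (Fin p) → ℝ)
    (γs : EuclideanSpace ℝ (Fin p)) (hγs : γs ∈ Θ) (χ : ℝ) (hχ : 0 < χ)
    (hG : ∀ γ ∈ Θ, G γ - G γs ≤ -χ * ‖γ - γs‖ ^ 2)
    (hGcont : ContinuousWithinAt G Θ γs)
    (Gn : ℕ → EuclideanSpace ℝ (Fin p) → ℝ)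
    (γh : ℕ → EuclideanSpace ℝ (Fin p)) (hγh : ∀ n, γh n ∈ Θ)
    (ε : ℕ → ℝ) (hε : ∀ n : ℕ, ∀ γ ∈ Θ, |(n : ℝ)⁻¹ * Gn n γ - G γ| ≤ ε n)
    (hε0 : Tendsto ε atTop (𝓝 0))
    (hγcons : Tendsto γh atTop (𝓝 γs)) :
    ∀ δ > (0 : ℝ), ∃ ε'' > (0 : ℝ), ∃ N : ℕ, ∀ n ≥ N,
      ∀ t : EuclideanSpace ℝ (Fin p), δ * Real.sqrt n ≤ ‖t‖ →
        γh n + (Real.sqrt n)⁻¹ • t ∈ Θ →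
        (n : ℝ)⁻¹ * (Gn n (γh n + (Real.sqrt n)⁻¹ • t) - Gn n (γh n)) < -ε'' :=
  tail_region_gap_general Θ G γs χ hχ hG hGcont Gn γh hγh ε hε hε0 hγcons
end
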